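/- arXiv:2411.08775 — 2 statements merged into one kernel-verified Lean document; each statement's English description precedes it below -/
import Mathlib

section
/- Let m ≥ 1 and let V and V′ be symmetric m×m integer matrices with determinant ±1, with V positive definite. Set R := max_{i} V′_{ii} (the maximum diagonal entry of V′). If P is an m×m integer matrix satisfying PᵀVP = V′, then every column p of P satisfies ‖p‖₂ ≤ N₁(V⁻¹)·R, where V⁻¹ is the integer inverse of V. -/
/-!
For a column `p` of `P` we have `pᵀVp = V'ⱼⱼ`. Cauchy–Schwarz for the positive semidefinite form
of `V`, applied to `p` and `V⁻¹p`, gives `‖p‖⁴ ≤ (pᵀVp)(pᵀV⁻¹p)`, and `pᵀV⁻¹p ≤ N₁(V⁻¹)‖p‖²` because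
`V⁻¹` is symmetric, so its absolute row sums are also bounded by `N₁(V⁻¹)`. Hence
`‖p‖² ≤ N₁(V⁻¹)·V'ⱼⱼ ≤ N₁(V⁻¹)·R`, and `‖p‖ ≤ ‖p‖²` since `‖p‖²` is a nonnegative integer.
-/

open Matrix

theorem two_mul_mul_mul_le_abs_mul {R : Type*} [CommRing R] [LinearOrder R]
    [IsStrictOrderedRing R] (a u v : R) : 2 * (u * a * v) ≤ |a| * u ^ 2 + |a| * v ^ 2 := by
  rcases abs_cases a with ⟨ha, ha0⟩ | ⟨ha, ha0⟩ <;> rw [ha]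
  · nlinarith [mul_nonneg ha0 (sq_nonneg (u - v))]
  · nlinarith [mul_nonneg (neg_nonneg.mpr ha0.le) (sq_nonneg (u + v))]

theorem Real.sqrt_intCast_le {k : ℤ} (hk : 0 ≤ k) {t : ℝ} (h : k ≤ t) : √k ≤ t := by
  obtain rfl | hk := hk.eq_or_lt
  · simpa using h
  exact (Real.sqrt_le_self_iff.mpr (Or.inr (by exact_mod_cast hk))).trans h

namespace Matrix

theorem transpose_mul_mul_apply {m n R : Type*} [Fintype m] [CommSemiring R]
    (P : Matrix m n R) (V : Matrix m m R) (j k : n) :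
    (Pᵀ * V * P) j k = Pᵀ j ⬝ᵥ V *ᵥ Pᵀ k := by
  rw [mul_apply', dotProduct_mulVec]
  rfl

variable {n : Type*} [Fintype n]
variable {R : Type*} [CommRing R] [LinearOrder R] [IsStrictOrderedRing R]

theorem IsSymm.dotProduct_mulVec_le_of_forall_sum_abs_le {A : Matrix n n R} (hA : A.IsSymm)
    {N : R} (hN : ∀ l, ∑ i, |A i l| ≤ N) (x : n → R) :
    x ⬝ᵥ A *ᵥ x ≤ N * (x ⬝ᵥ x) := by
  have hexpand : x ⬝ᵥ A *ᵥ x = ∑ i, ∑ l, x i * A i l * x l := by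
    simp [dotProduct, mulVec, Finset.mul_sum, mul_assoc, mul_left_comm]
  have hswap : ∑ i, ∑ l, |A i l| * x i ^ 2 = ∑ i, ∑ l, |A i l| * x l ^ 2 := by
    rw [Finset.sum_comm]
    simp only [hA.apply]
  have hcol : ∑ i, ∑ l, |A i l| * x l ^ 2 ≤ N * (x ⬝ᵥ x) := by
    rw [Finset.sum_comm, dotProduct, Finset.mul_sum]
    refine Finset.sum_le_sum fun l _ => ?_
    rw [← Finset.sum_mul, ← sq]
    exact mul_le_mul_of_nonneg_right (hN l) (sq_nonneg _)
  have hterms : 2 * (x ⬝ᵥ A *ᵥ x) ≤ ∑ i, ∑ l, (|A i l| * x i ^ 2 + |A i l| * x l ^ 2) := by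
    rw [hexpand, Finset.mul_sum]
    refine Finset.sum_le_sum fun i _ => ?_
    rw [Finset.mul_sum]
    exact Finset.sum_le_sum fun l _ => two_mul_mul_mul_le_abs_mul _ _ _
  simp only [Finset.sum_add_distrib, hswap] at hterms
  linarith

variable [DecidableEq n] [StarRing R] [TrivialStar R]

theorem PosSemidef.dotProduct_mulVec_sq_le {A : Matrix n n R} (hA : A.PosSemidef) (x y : n → R) :
    (x ⬝ᵥ A *ᵥ y) ^ 2 ≤ (x ⬝ᵥ A *ᵥ x) * (y ⬝ᵥ A *ᵥ y) := by
  have hsymm : A.toBilin'.IsSymm :=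
    isSymm_toBilin'_iff_isSymm.mpr (isHermitian_iff_isSymm.mp hA.isHermitian)
  have hnonneg (z : n → R) : 0 ≤ A.toBilin' z z := by
    simpa [toBilin'_apply'] using hA.dotProduct_mulVec_nonneg z
  simpa only [toBilin'_apply'] using
    A.toBilin'.apply_sq_le_of_symm hnonneg (LinearMap.BilinForm.isSymm_iff.mp hsymm) x y

theorem PosSemidef.dotProduct_self_sq_le {A B : Matrix n n R} (hA : A.PosSemidef)
    (hAB : A * B = 1) (x : n → R) :
    (x ⬝ᵥ x) ^ 2 ≤ (x ⬝ᵥ A *ᵥ x) * (x ⬝ᵥ B *ᵥ x) := by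
  have hABx : A *ᵥ (B *ᵥ x) = x := by rw [mulVec_mulVec, hAB, one_mulVec]
  have h := hA.dotProduct_mulVec_sq_le x (B *ᵥ x)
  rwa [hABx, dotProduct_comm (B *ᵥ x)] at h

theorem PosSemidef.dotProduct_self_le_of_mul_eq_one {A B : Matrix n n R} (hA : A.PosSemidef)
    (hAB : A * B = 1) {N : R} (hN : ∀ l, ∑ i, |B i l| ≤ N) (x : n → R) :
    x ⬝ᵥ x ≤ N * (x ⬝ᵥ A *ᵥ x) := by
  have hB : B.IsSymm := inv_eq_right_inv hAB ▸ (isHermitian_iff_isSymm.mp hA.isHermitian).inv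
  obtain rfl | hx := eq_or_ne x 0
  · simp
  have hS : 0 < x ⬝ᵥ x := lt_of_le_of_ne (Finset.sum_nonneg fun i _ => mul_self_nonneg (x i))
    (Ne.symm (dotProduct_self_eq_zero.not.mpr hx))
  have hAx : 0 ≤ x ⬝ᵥ A *ᵥ x := by simpa using hA.dotProduct_mulVec_nonneg x
  refine le_of_mul_le_mul_right ?_ hS
  calc (x ⬝ᵥ x) * (x ⬝ᵥ x) ≤ (x ⬝ᵥ A *ᵥ x) * (x ⬝ᵥ B *ᵥ x) := by
        simpa only [sq] using hA.dotProduct_self_sq_le hAB x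
    _ ≤ (x ⬝ᵥ A *ᵥ x) * (N * (x ⬝ᵥ x)) :=
        mul_le_mul_of_nonneg_left (hB.dotProduct_mulVec_le_of_forall_sum_abs_le hN x) hAx
    _ = N * (x ⬝ᵥ A *ᵥ x) * (x ⬝ᵥ x) := by ring

end Matrix

theorem column_norm_bound_of_congruence_general (m : ℕ) (hm : 1 ≤ m)
    (V V' : Matrix (Fin m) (Fin m) ℤ)
    (hdet : V.det = 1 ∨ V.det = -1)
    (hpos : (V.map ((↑) : ℤ → ℝ)).PosDef)
    (P : Matrix (Fin m) (Fin m) ℤ) (hP : Pᵀ * V * P = V') :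
    ∀ j : Fin m,
      Real.sqrt (∑ i : Fin m, ((P i j : ℝ)) ^ 2) ≤
        (((Finset.univ.sup' (Finset.univ_nonempty_iff.mpr ⟨⟨0, hm⟩⟩)
              (fun l : Fin m => ∑ i : Fin m, |V⁻¹ i l|)) *
            (Finset.univ.sup' (Finset.univ_nonempty_iff.mpr ⟨⟨0, hm⟩⟩)
              (fun i : Fin m => V' i i)) : ℤ) : ℝ) := by
  intro j
  set N := Finset.univ.sup' _ fun l : Fin m => ∑ i : Fin m, |V⁻¹ i l|
  set R := Finset.univ.sup' _ fun i : Fin m => V' i i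
  have hN (l : Fin m) : ∑ i, |V⁻¹ i l| ≤ N :=
    Finset.le_sup' (fun l => ∑ i, |V⁻¹ i l|) (Finset.mem_univ l)
  have hN0 : 0 ≤ N := (Finset.sum_nonneg fun i _ => abs_nonneg _).trans (hN j)
  have hR : V' j j ≤ R := Finset.le_sup' (fun i => V' i i) (Finset.mem_univ j)
  have hinv : V.map ((↑) : ℤ → ℝ) * V⁻¹.map (↑) = 1 := by
    have hunit : IsUnit V.det := by rcases hdet with h | h <;> simp [h]
    simpa [map_mul] using congrArg (Int.castRingHom ℝ).mapMatrix (mul_nonsing_inv V hunit)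
  have hP' : (P.map ((↑) : ℤ → ℝ))ᵀ * V.map (↑) * P.map (↑) = V'.map (↑) := by
    simpa [map_mul, transpose_map] using congrArg (Int.castRingHom ℝ).mapMatrix hP
  have hnorm := hpos.posSemidef.dotProduct_self_le_of_mul_eq_one hinv (N := (N : ℝ))
    (fun l => by simp only [map_apply]; exact_mod_cast hN l) ((P.map ((↑) : ℤ → ℝ))ᵀ j)
  rw [← transpose_mul_mul_apply, hP'] at hnorm
  have hsum : ∑ i, (P i j : ℝ) ^ 2 = ((∑ i, P i j ^ 2 : ℤ) : ℝ) := by push_cast; rfl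
  rw [hsum]
  refine Real.sqrt_intCast_le (Finset.sum_nonneg fun i _ => sq_nonneg _) ?_
  calc ((∑ i, P i j ^ 2 : ℤ) : ℝ) = (P.map ((↑) : ℤ → ℝ))ᵀ j ⬝ᵥ (P.map (↑))ᵀ j := by
        push_cast; simp [dotProduct, sq]
    _ ≤ N * V' j j := hnorm
    _ ≤ N * R := by gcongr
    _ = ((N * R : ℤ) : ℝ) := by push_cast; rfl

/-- If `PᵀVP = V′` with `V` positive definite, symmetric and unimodular and `V′`
symmetric and unimodular, then every column `p` of `P` satisfies
`‖p‖₂ ≤ N₁(V⁻¹) · R`, where `R` is the maximum diagonal entry of `V′`. -/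
theorem column_norm_bound_of_congruence (m : ℕ) (hm : 1 ≤ m)
    (V V' : Matrix (Fin m) (Fin m) ℤ) (hsymm : V.IsSymm) (hsymm' : V'.IsSymm)
    (hdet : V.det = 1 ∨ V.det = -1) (hdet' : V'.det = 1 ∨ V'.det = -1)
    (hpos : (V.map ((↑) : ℤ → ℝ)).PosDef)
    (P : Matrix (Fin m) (Fin m) ℤ) (hP : Pᵀ * V * P = V') :
    ∀ j : Fin m,
      Real.sqrt (∑ i : Fin m, ((P i j : ℝ)) ^ 2) ≤
        (((Finset.univ.sup' (Finset.univ_nonempty_iff.mpr ⟨⟨0, hm⟩⟩)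
              (fun l : Fin m => ∑ i : Fin m, |V⁻¹ i l|)) *
            (Finset.univ.sup' (Finset.univ_nonempty_iff.mpr ⟨⟨0, hm⟩⟩)
              (fun i : Fin m => V' i i)) : ℤ) : ℝ) :=
  column_norm_bound_of_congruence_general m hm V V' hdet hpos P hP
end

section
/- For all natural numbers m and n, the predicate on pairs (A, b), where A is an m×n integer matrix and b ∈ ℤ^m, asserting 'there exists x ∈ ℤ^n with A·x = b (matrix–vector multiplication)' is decidable in the computability-theoretic sense: it is a ComputablePred with respect to the canonical encoding. That is, there exists an algorithm that takes as input an integer matrix A and an integer vector b and decides whether or not the linear system Ax = b has an integral solution. -/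
/-!
Solvable systems are recursively enumerable: search for `x`. So are unsolvable ones, by searching
for a certificate `(y, N)` with `N ∣ yᵀA` and `N ∤ yᵀb`. Such a certificate exists whenever
`Ax = b` has no integral solution: `b` is then a nonzero element of the finitely generated abelian
group `ℤᵐ / Aℤⁿ`, and by the structure theorem a homomorphism to some `ZMod N`
does not kill it; its values on the unit vectors give `y`. Post's theorem finishes the proof.
-/

open Matrix

theorem AddCommGroup.exists_addMonoidHom_zmod_apply_ne_zero {G : Type*} [AddCommGroup G]
    [AddGroup.FG G] {g : G} (hg : g ≠ 0) : ∃ (N : ℕ) (φ : G →+ ZMod N), φ g ≠ 0 := by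
  obtain ⟨r, ι, _, p, _, e, ⟨f⟩⟩ := AddCommGroup.equiv_free_prod_directSum_zmod G
  have hfg : f g ≠ 0 := (map_ne_zero_iff f f.injective).mpr hg
  by_cases hfree : (f g).1 = 0
  · obtain ⟨i, hi⟩ : ∃ i, (f g).2 i ≠ 0 := by
      by_contra! h
      exact hfg (Prod.ext hfree (DFinsupp.ext h))
    exact ⟨p i ^ e i, (DFinsupp.evalAddMonoidHom i).comp
      ((AddMonoidHom.snd _ _).comp f.toAddMonoidHom), hi⟩
  · obtain ⟨j, hj⟩ := Finsupp.ne_iff.mp hfree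
    -- `ZMod 0` is `ℤ`, so a free coordinate is already a homomorphism to some `ZMod N`.
    exact ⟨0, (Finsupp.applyAddHom j).comp ((AddMonoidHom.fst _ _).comp f.toAddMonoidHom), hj⟩

theorem AddMonoidHom.exists_intCast_dotProduct_eq {ι : Type*} [Fintype ι] {N : ℕ}
    (φ : (ι → ℤ) →+ ZMod N) : ∃ y : ι → ℤ, ∀ v, ((y ⬝ᵥ v : ℤ) : ZMod N) = φ v := by
  classical
  set y : ι → ℤ := fun i => (φ (Pi.single i 1)).cast
  let ψ : (ι → ℤ) →+ ZMod N :=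
    AddMonoidHom.mk' (fun v => ((y ⬝ᵥ v : ℤ) : ZMod N)) fun v w => by simp [dotProduct_add]
  refine ⟨y, DFunLike.congr_fun (AddMonoidHom.functions_ext _ ψ φ fun i z => ?_)⟩
  calc ψ (Pi.single i z) = z • φ (Pi.single i 1) := by simp [ψ, y, dotProduct_single, mul_comm]
    _ = φ (Pi.single i z) := by rw [← map_zsmul, ← Pi.single_smul, smul_eq_mul, mul_one]

theorem Matrix.exists_mulVec_eq_iff_forall_dvd {ι κ : Type*} [Fintype ι] [Fintype κ]
    (A : Matrix ι κ ℤ) (b : ι → ℤ) :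
    (∃ x, A *ᵥ x = b) ↔ ∀ (y : ι → ℤ) (N : ℕ), (∀ j, (N : ℤ) ∣ (y ᵥ* A) j) → (N : ℤ) ∣ y ⬝ᵥ b := by
  constructor
  · rintro ⟨x, rfl⟩ y N hN
    rw [dotProduct_mulVec]
    exact Finset.dvd_sum fun j _ => (hN j).mul_right _
  · intro h
    by_contra hb
    let L := LinearMap.range A.mulVecLin
    have hne : (Submodule.Quotient.mk b : (ι → ℤ) ⧸ L) ≠ 0 := by
      rwa [Ne, Submodule.Quotient.mk_eq_zero]
    have : AddGroup.FG ((ι → ℤ) ⧸ L) := Module.Finite.iff_addGroup_fg.mp inferInstance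
    obtain ⟨N, φ, hφ⟩ := AddCommGroup.exists_addMonoidHom_zmod_apply_ne_zero hne
    obtain ⟨y, hy⟩ := (φ.comp L.mkQ.toAddMonoidHom).exists_intCast_dotProduct_eq
    have hA : ∀ x, (N : ℤ) ∣ y ⬝ᵥ (A *ᵥ x) := fun x => by
      rw [← ZMod.intCast_zmod_eq_zero_iff_dvd, hy, AddMonoidHom.comp_apply,
        LinearMap.toAddMonoidHom_coe, Submodule.mkQ_apply,
        (Submodule.Quotient.mk_eq_zero L (x := A *ᵥ x)).mpr ⟨x, rfl⟩, map_zero]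
    have hyb : (N : ℤ) ∣ y ⬝ᵥ b := h y N fun j => by
      classical
      simpa only [dotProduct_mulVec, dotProduct_single, mul_one] using hA (Pi.single j 1)
    rw [← ZMod.intCast_zmod_eq_zero_iff_dvd, hy] at hyb
    exact hφ (by simpa using hyb)

namespace Primrec

theorem intEquivNatSumNat : Primrec Equiv.intEquivNatSumNat :=
  encode_iff.mp (Primrec.encode.of_eq fun z => by cases z <;> rfl)

theorem intEquivNatSumNat_symm : Primrec Equiv.intEquivNatSumNat.symm :=
  encode_iff.mp (Primrec.encode.of_eq fun s => by cases s <;> rfl)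

theorem int_toNat : Primrec Int.toNat :=
  (sumCasesOn intEquivNatSumNat Primrec₂.right (const 0).to₂).of_eq fun z => by cases z <;> rfl

theorem int_neg_toNat : Primrec fun z : ℤ => (-z).toNat :=
  (sumCasesOn intEquivNatSumNat (const 0).to₂ (succ.comp snd).to₂).of_eq fun z => by
    rcases z with (_ | _) | _ <;> rfl

theorem int_subNatNat : Primrec₂ Int.subNatNat := by
  refine (intEquivNatSumNat_symm.comp (ite (nat_le.comp snd fst)
    (sumInl.comp (nat_sub.comp fst snd))
    (sumInr.comp (nat_sub.comp (nat_sub.comp snd fst) (const 1))))).of_eq fun ⟨k, l⟩ => ?_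
  rw [Int.subNatNat_eq_coe]
  split_ifs with h
  · change ((k - l : ℕ) : ℤ) = _
    omega
  · change Int.negSucc (l - k - 1) = _
    rw [Int.negSucc_eq]
    omega

theorem int_natAbs : Primrec Int.natAbs :=
  (nat_add.comp int_toNat int_neg_toNat).of_eq Int.toNat_add_toNat_neg_eq_natAbs

/- With `z⁺ = z.toNat` and `z⁻ = (-z).toNat` we have `z = z⁺ - z⁻`, so sums and products of
integers are `Int.subNatNat` of sums and products of naturals. -/
theorem int_add : Primrec₂ ((· + ·) : ℤ → ℤ → ℤ) := by
  refine (int_subNatNat.comp (nat_add.comp (int_toNat.comp fst) (int_toNat.comp snd))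
    (nat_add.comp (int_neg_toNat.comp fst) (int_neg_toNat.comp snd))).of_eq fun ⟨a, b⟩ => ?_
  simp only [Int.subNatNat_eq_coe]
  omega

theorem int_mul : Primrec₂ ((· * ·) : ℤ → ℤ → ℤ) := by
  refine (int_subNatNat.comp
    (nat_add.comp (nat_mul.comp (int_toNat.comp fst) (int_toNat.comp snd))
      (nat_mul.comp (int_neg_toNat.comp fst) (int_neg_toNat.comp snd)))
    (nat_add.comp (nat_mul.comp (int_toNat.comp fst) (int_neg_toNat.comp snd))
      (nat_mul.comp (int_neg_toNat.comp fst) (int_toNat.comp snd)))).of_eq fun ⟨a, b⟩ => ?_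
  conv_rhs => rw [← Int.toNat_sub_toNat_neg a, ← Int.toNat_sub_toNat_neg b]
  simp only [Int.subNatNat_eq_coe]
  push_cast
  ring

variable {α : Type*} [Primcodable α]

theorem int_sum_fin {k : ℕ} {f : α → Fin k → ℤ} (hf : ∀ i, Primrec fun a => f a i) :
    Primrec fun a => ∑ i, f a i := by
  induction k with
  | zero => exact (const 0).of_eq fun a => by simp
  | succ k ih =>
    exact (int_add.comp (hf 0) (ih fun i => hf i.succ)).of_eq fun a => (Fin.sum_univ_succ _).symm

theorem int_dotProduct {k : ℕ} : Primrec₂ ((· ⬝ᵥ ·) : (Fin k → ℤ) → (Fin k → ℤ) → ℤ) :=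
  int_sum_fin fun i => int_mul.comp (fin_app.comp fst (const i)) (fin_app.comp snd (const i))

theorem int_mulVec {m n : ℕ} : Primrec₂ fun (M : Fin m → Fin n → ℤ) (x : Fin n → ℤ) => of M *ᵥ x :=
  fin_curry.mpr <| Primrec₂.swap <| fin_curry₁.mpr fun i =>
    int_dotProduct.comp (fin_app.comp fst (const i)) snd

theorem int_vecMul {m n : ℕ} : Primrec₂ fun (y : Fin m → ℤ) (M : Fin m → Fin n → ℤ) => y ᵥ* of M :=
  fin_curry.mpr <| Primrec₂.swap <| fin_curry₁.mpr fun j =>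
    int_sum_fin fun i => int_mul.comp (fin_app.comp fst (const i))
      (fin_app.comp (fin_app.comp snd (const i)) (const j))

theorem int_natCast_dvd : PrimrecRel fun (N : ℕ) (z : ℤ) => (N : ℤ) ∣ z :=
  (Primrec.eq.comp (nat_mod.comp (int_natAbs.comp snd) fst) (const 0)).of_eq fun _ =>
    (Int.natCast_dvd.trans Nat.dvd_iff_mod_eq_zero).symm

end Primrec

theorem PrimrecRel.forall_fin {β : Type*} [Primcodable β] {n : ℕ} {R : Fin n → β → Prop}
    (hR : PrimrecRel R) : PrimrecPred fun b => ∀ i, R i b :=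
  (hR.forall_mem_list.comp (Primrec.const (List.finRange n)) Primrec.id).of_eq fun b => by simp

theorem REPred.exists {α β : Type*} [Primcodable α] [Primcodable β] {q : α × β → Prop}
    (hq : ComputablePred q) : REPred fun a => ∃ b, q (a, b) := by
  obtain ⟨f, hf, hqf⟩ := ComputablePred.computable_iff.mp hq
  have : Partrec fun a => Nat.rfindOpt fun k =>
      (Encodable.decode (α := β) k).bind fun b => bif f (a, b) then some b else none :=
    Partrec.rfindOpt <| Computable.option_bind (Computable.decode.comp Computable.snd) <|
      Computable.cond (hf.comp ((Computable.fst.comp Computable.fst).pair Computable.snd))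
        (Computable.option_some.comp Computable.snd) (Computable.const none)
  refine this.dom_re.of_eq fun a => ?_
  have hqa : ∀ b, q (a, b) ↔ f (a, b) = true := fun b => iff_of_eq (congrFun hqf (a, b))
  simp only [Nat.rfindOpt_dom, Option.mem_def, Option.bind_eq_some_iff]
  constructor
  · rintro ⟨k, b, b', -, hb⟩
    refine ⟨b', (hqa b').mpr ?_⟩
    cases h : f (a, b') <;> simp_all
  · rintro ⟨b, hb⟩
    exact ⟨Encodable.encode b, b, b, Encodable.encodek b, by simp [(hqa b).mp hb]⟩

/-- Solvability of integral linear systems `Ax = b` is computably decidable. -/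
theorem computablePred_integral_linear_system (m n : ℕ) :
    ComputablePred fun p : (Fin m → Fin n → ℤ) × (Fin m → ℤ) =>
      ∃ x : Fin n → ℤ, (Matrix.of p.1).mulVec x = p.2 := by
  open Primrec in
  have hsolution : PrimrecRel fun (p : (Fin m → Fin n → ℤ) × (Fin m → ℤ)) (x : Fin n → ℤ) =>
      of p.1 *ᵥ x = p.2 :=
    Primrec.eq.comp (int_mulVec.comp (fst.comp fst) snd) (snd.comp fst)
  open Primrec in
  have hobstruction : PrimrecRel fun (p : (Fin m → Fin n → ℤ) × (Fin m → ℤ))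
      (c : (Fin m → ℤ) × ℕ) => (∀ j, (c.2 : ℤ) ∣ (c.1 ᵥ* of p.1) j) ∧ ¬(c.2 : ℤ) ∣ c.1 ⬝ᵥ p.2 :=
    .and (PrimrecRel.forall_fin (int_natCast_dvd.comp (snd.comp (snd.comp snd))
      (fin_app.comp (int_vecMul.comp (fst.comp (snd.comp snd)) (fst.comp (fst.comp snd))) fst)))
      (int_natCast_dvd.comp (snd.comp snd) (int_dotProduct.comp (fst.comp snd) (snd.comp fst))).not
  refine ComputablePred.computable_iff_re_compl_re'.mpr ⟨REPred.exists hsolution.computablePred,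
    (REPred.exists hobstruction.computablePred).of_eq fun p => ?_⟩
  rw [exists_mulVec_eq_iff_forall_dvd]
  simp [Prod.exists]
end
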